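/- Let X, Y be Banach spaces, G ∈ L(X,Y) with ‖G‖ = 1, and suppose there exists T ∈ L(X) with v(T) = 0 (numerical radius zero with respect to the identity of X) and G ∘ T ≠ 0. Then n_G(X,Y) = 0. -/

import Mathlib

open NormedSpace

/-- Numerical radius of `z` with respect to the unit vector `u`. -/
noncomputable def vRad {Z : Type*} [NormedAddCommGroup Z] [NormedSpace ℝ Z] (u z : Z) : ℝ :=
  sSup {r : ℝ | ∃ φ : StrongDual ℝ Z, ‖φ‖ = 1 ∧ φ u = 1 ∧ |φ z| = r}

/-- Numerical index of the space with respect to the unit vector `u`. -/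
noncomputable def nInd {Z : Type*} [NormedAddCommGroup Z] [NormedSpace ℝ Z] (u : Z) : ℝ :=
  sInf {r : ℝ | ∃ z : Z, ‖z‖ = 1 ∧ vRad u z = r}

/-!
The functional `S ↦ Φ (G ∘ S)` on `L(X)` induced by a state `Φ` of `L(X,Y)` at `G` (with
`‖G‖ ≤ 1`) is a state of `L(X)` at the identity, so `v_G(G ∘ S) ≤ v(S)`. Hence if `v(T) = 0`
and `G ∘ T ≠ 0`, the normalisation of `G ∘ T` is a unit vector of numerical radius zero
with respect to `G`.
-/

section NumericalRadius

variable {Z : Type*} [NormedAddCommGroup Z] [NormedSpace ℝ Z]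

lemma vRad_nonneg (u z : Z) : 0 ≤ vRad u z :=
  Real.sSup_nonneg fun _ ⟨_, _, _, hr⟩ => hr ▸ abs_nonneg _

lemma abs_le_vRad {u : Z} (z : Z) {φ : StrongDual ℝ Z} (hφ : ‖φ‖ = 1) (hu : φ u = 1) :
    |φ z| ≤ vRad u z := by
  refine le_csSup ⟨‖z‖, ?_⟩ ⟨φ, hφ, hu, rfl⟩
  rintro _ ⟨ψ, hψ, -, rfl⟩
  simpa [hψ] using ψ.le_opNorm z

lemma vRad_eq_zero_iff {u z : Z} :
    vRad u z = 0 ↔ ∀ φ : StrongDual ℝ Z, ‖φ‖ = 1 → φ u = 1 → φ z = 0 := by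
  refine ⟨fun h φ hφ hu => abs_nonpos_iff.mp (h ▸ abs_le_vRad z hφ hu), fun h => ?_⟩
  refine le_antisymm (Real.sSup_nonpos ?_) (vRad_nonneg u z)
  rintro _ ⟨φ, hφ, hu, rfl⟩
  simp [h φ hφ hu]

lemma nInd_eq_zero_of_vRad_eq_zero {u z : Z} (hz : z ≠ 0) (h : vRad u z = 0) :
    nInd u = 0 := by
  have hunit : ‖‖z‖⁻¹ • z‖ = 1 := norm_smul_inv_norm hz
  have hzero : vRad u (‖z‖⁻¹ • z) = 0 := by
    rw [vRad_eq_zero_iff] at h ⊢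
    intro φ hφ hu
    simp [h φ hφ hu]
  refine le_antisymm (csInf_le ⟨0, ?_⟩ ⟨_, hunit, hzero⟩) (Real.sInf_nonneg ?_) <;>
    rintro _ ⟨w, -, rfl⟩ <;> exact vRad_nonneg u w

end NumericalRadius

section Composition

variable {X Y : Type*} [NormedAddCommGroup X] [NormedSpace ℝ X]
  [NormedAddCommGroup Y] [NormedSpace ℝ Y]

lemma norm_comp_compL_eq_one {G : X →L[ℝ] Y} (hG : ‖G‖ ≤ 1)
    {Φ : StrongDual ℝ (X →L[ℝ] Y)} (hΦ : ‖Φ‖ = 1) (hΦG : Φ G = 1) :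
    ‖Φ.comp (ContinuousLinearMap.compL ℝ X X Y G)‖ = 1 := by
  set ψ := Φ.comp (ContinuousLinearMap.compL ℝ X X Y G)
  have hψid : ψ (ContinuousLinearMap.id ℝ X) = 1 := hΦG
  refine le_antisymm (ψ.opNorm_le_bound zero_le_one fun S => ?_) ?_
  · calc ‖Φ (G.comp S)‖ ≤ ‖Φ‖ * ‖G.comp S‖ := Φ.le_opNorm _
      _ ≤ 1 * ‖S‖ := by
        rw [hΦ, one_mul, one_mul]
        exact (G.opNorm_comp_le S).trans (mul_le_of_le_one_left (norm_nonneg S) hG)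
  · calc (1 : ℝ) = ‖ψ (ContinuousLinearMap.id ℝ X)‖ := by simp [hψid]
      _ ≤ ‖ψ‖ * ‖ContinuousLinearMap.id ℝ X‖ := ψ.le_opNorm _
      _ ≤ ‖ψ‖ * 1 := by gcongr; exact ContinuousLinearMap.norm_id_le
      _ = ‖ψ‖ := mul_one _

lemma vRad_comp_le {G : X →L[ℝ] Y} (hG : ‖G‖ ≤ 1) (S : X →L[ℝ] X) :
    vRad G (G.comp S) ≤ vRad (ContinuousLinearMap.id ℝ X) S := by
  refine Real.sSup_le ?_ (vRad_nonneg _ _)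
  rintro _ ⟨Φ, hΦ, hΦG, rfl⟩
  exact abs_le_vRad (φ := Φ.comp (ContinuousLinearMap.compL ℝ X X Y G)) S
    (norm_comp_compL_eq_one hG hΦ hΦG) hΦG

end Composition

theorem stmt12_general {X Y : Type*} [NormedAddCommGroup X] [NormedSpace ℝ X]
    [NormedAddCommGroup Y] [NormedSpace ℝ Y]
    (G : X →L[ℝ] Y) (hG : ‖G‖ = 1) (T : X →L[ℝ] X)
    (hT : vRad (ContinuousLinearMap.id ℝ X) T = 0) (hGT : G.comp T ≠ 0) :
    nInd G = 0 :=
  nInd_eq_zero_of_vRad_eq_zero hGT <|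
    le_antisymm (hT ▸ vRad_comp_le hG.le T) (vRad_nonneg _ _)

theorem stmt12 {X Y : Type*} [NormedAddCommGroup X] [NormedSpace ℝ X] [CompleteSpace X]
    [NormedAddCommGroup Y] [NormedSpace ℝ Y] [CompleteSpace Y]
    (G : X →L[ℝ] Y) (hG : ‖G‖ = 1) (T : X →L[ℝ] X)
    (hT : vRad (ContinuousLinearMap.id ℝ X) T = 0) (hGT : G.comp T ≠ 0) :
    nInd G = 0 :=
  stmt12_general G hG T hT hGT
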